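/- If l is odd and n is a natural number with n ≡ 3 (mod 6), then b_{n−1} · b_{n+1} ≡ 1 (mod 4). -/
import Mathlib


/-- The sequence `a` defined by `a 0 = 0`, `a 1 = 1`, `a (n+2) = l * a (n+1) + a n`. -/
def a (l : ℕ) : ℕ → ℤ
  | 0 => 0
  | 1 => 1
  | n + 2 => l * a l (n + 1) + a l n

/-- The sequence `b` defined by `b 0 = 2`, `b 1 = l`, `b (n+2) = l * b (n+1) + b n`. -/
def b (l : ℕ) : ℕ → ℤ
  | 0 => 2
  | 1 => (l : ℤ)
  | n + 2 => l * b l (n + 1) + b l n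

lemma b_rec (l : ℕ) (k : ℕ) : b l (k + 2) = l * b l (k + 1) + b l k := rfl

lemma cast_cases (l : ℕ) (hlo : Odd l) :
    ((l : ZMod 4)) = 1 ∨ ((l : ZMod 4)) = 3 := by
  obtain ⟨m, rfl⟩ := hlo
  push_cast
  have : ∀ x : ZMod 4, 2 * x + 1 = 1 ∨ 2 * x + 1 = 3 := by decide
  exact this _

lemma b_period (l : ℕ) (hlo : Odd l) :
    ∀ k, ((b l (k + 6) : ZMod 4)) = (b l k : ZMod 4) ∧
      ((b l (k + 7) : ZMod 4)) = (b l (k + 1) : ZMod 4) := by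
  intro k
  induction k with
  | zero =>
    rcases cast_cases l hlo with h | h <;>
    · simp only [b]
      push_cast
      rw [h]
      constructor <;> ring_nf <;> decide
  | succ k ih =>
    obtain ⟨ih1, ih2⟩ := ih
    refine ⟨ih2, ?_⟩
    show ((b l (k + 6 + 2) : ZMod 4)) = (b l (k + 2) : ZMod 4)
    rw [b_rec l (k + 6), b_rec l k]
    push_cast
    rw [ih1, ih2]

lemma b_shift (l : ℕ) (hlo : Odd l) (r : ℕ) :
    ∀ m, ((b l (6 * m + r) : ZMod 4)) = (b l r : ZMod 4) := by
  intro m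
  induction m with
  | zero => simp
  | succ m ih =>
    have : 6 * (m + 1) + r = (6 * m + r) + 6 := by ring
    rw [this, (b_period l hlo (6 * m + r)).1, ih]

theorem b_mul_b_mod_four_of_mod_six_eq_three (l : ℕ) (hl : 0 < l) (hlo : Odd l) (n : ℕ)
    (h6 : n % 6 = 3) :
    b l (n - 1) * b l (n + 1) ≡ 1 [ZMOD 4] := by
  obtain ⟨m, rfl⟩ : ∃ m, n = 6 * m + 3 := ⟨n / 6, by omega⟩
  have h1 : 6 * m + 3 - 1 = 6 * m + 2 := by omega
  have h2 : 6 * m + 3 + 1 = 6 * m + 4 := by omega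
  rw [h1, h2]
  have e2 := b_shift l hlo 2 m
  have e4 := b_shift l hlo 4 m
  have goal4 : ((b l (6 * m + 2) * b l (6 * m + 4) : ℤ) : ZMod 4) = ((1 : ℤ) : ZMod 4) := by
    push_cast
    rw [e2, e4]
    rcases cast_cases l hlo with h | h <;>
    · simp only [b]
      push_cast
      rw [h]
      ring_nf
      decide
  exact (ZMod.intCast_eq_intCast_iff _ _ _).mp goal4
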